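/- arXiv:2110.06250 — 3 statements merged into one kernel-verified Lean document; each statement's English description precedes it below -/
import Mathlib

section
/- (Theorem 1.) Consider a permutation invariant model and two permutation invariant measurable loss-type functions L, h : 𝒵ⁿ × 𝒯ⁿ × 𝒜 → [0,∞] (PI with respect to the same action ã on 𝒜). Fix θ ∈ 𝒯ⁿ, a set T̄ ⊆ 𝒯, and α ≥ 0. For a measurable rule δ define the mixture functionals B_θ(δ) = (1/n!) Σ_{g∈S_n} ∫ L(z, g(θ), δ(z)) dP_{g(θ)}(z) and, for θ' ∈ 𝒯ⁿ, H_{θ'}(δ) = (1/n!) Σ_{g∈S_n} ∫ h(z, g(θ'), δ(z)) dP_{g(θ')}(z). Suppose δ^B is a permutation invariant measurable rule satisfying H_{θ'}(δ^B) ≤ α for all θ' ∈ T̄ⁿ, and B_θ(δ^B) ≤ B_θ(δ) for every measurable rule δ satisfying H_{θ'}(δ) ≤ α for all θ' ∈ T̄ⁿ. Then: (i) δ^B is feasible for the original problem, i.e. ∫ h(z, θ', δ^B(z)) dP_{θ'}(z) ≤ α for all θ' ∈ T̄ⁿ; and (ii) R(θ, δ^B) ≤ R(θ, δ) for every permutation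 invariant measurable rule δ with ∫ h(z, θ', δ(z)) dP_{θ'}(z) ≤ α for all θ' ∈ T̄ⁿ. Hence R(θ, δ^B) is the minimum risk at θ over all feasible permutation invariant rules. -/
/-!
For a permutation invariant rule `δ`, the change of variables `z ↦ g(z)`, together with the
invariance of the model, of the loss and of `δ`, turns the `g`-th term of a mixture functional
into the plain integral at the unpermuted parameter. So on permutation invariant rules the
mixture functionals `B_θ` and `H_θ'` coincide with the risk at `θ` and with the original
constraint, and feasibility and optimality of `δᴮ` for the mixture problem transfer.
-/

open MeasureTheory
open scoped ENNReal

section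

variable {ι 𝓩 𝓣 𝓐 : Type*} [MeasurableSpace 𝓩]

theorem measurableEmbedding_comp_perm (g : Equiv.Perm ι) :
    MeasurableEmbedding (fun (z : ι → 𝓩) i => z (g i)) := by
  convert (MeasurableEquiv.piCongrLeft (fun _ => 𝓩) g.symm).measurableEmbedding
  rw [MeasurableEquiv.coe_piCongrLeft, Equiv.piCongrLeft_apply]
  simp

theorem lintegral_perm_eq_of_permInvariant
    (P : (ι → 𝓣) → Measure (ι → 𝓩))
    (hP : ∀ (θ : ι → 𝓣) (g : Equiv.Perm ι),
      (P θ).map (fun z i => z (g i)) = P (fun i => θ (g i)))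
    (act : Equiv.Perm ι → 𝓐 → 𝓐) (F : (ι → 𝓩) → (ι → 𝓣) → 𝓐 → ℝ≥0∞)
    (hF : ∀ (z : ι → 𝓩) (θ : ι → 𝓣) (a : 𝓐) (g : Equiv.Perm ι),
      F (fun i => z (g i)) (fun i => θ (g i)) (act g a) = F z θ a)
    (δ : (ι → 𝓩) → 𝓐)
    (hδ : ∀ (g : Equiv.Perm ι) (z : ι → 𝓩), δ (fun i => z (g i)) = act g (δ z))
    (θ : ι → 𝓣) (g : Equiv.Perm ι) :
    ∫⁻ z, F z (fun i => θ (g i)) (δ z) ∂P (fun i => θ (g i)) = ∫⁻ z, F z θ (δ z) ∂P θ := by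
  rw [← hP θ g, (measurableEmbedding_comp_perm g).lintegral_map]
  simp only [hδ, hF]

theorem inv_factorial_mul_sum_perm_const (n : ℕ) (x : ℝ≥0∞) :
    (n.factorial : ℝ≥0∞)⁻¹ * ∑ _g : Equiv.Perm (Fin n), x = x := by
  rw [Finset.sum_const, Finset.card_univ, Fintype.card_perm, Fintype.card_fin, nsmul_eq_mul,
    ← mul_assoc, ENNReal.inv_mul_cancel (mod_cast n.factorial_ne_zero) (ENNReal.natCast_ne_top _),
    one_mul]

theorem mixture_eq_lintegral_of_permInvariant {n : ℕ}
    (P : (Fin n → 𝓣) → Measure (Fin n → 𝓩))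
    (hP : ∀ (θ : Fin n → 𝓣) (g : Equiv.Perm (Fin n)),
      (P θ).map (fun z i => z (g i)) = P (fun i => θ (g i)))
    (act : Equiv.Perm (Fin n) → 𝓐 → 𝓐) (F : (Fin n → 𝓩) → (Fin n → 𝓣) → 𝓐 → ℝ≥0∞)
    (hF : ∀ (z : Fin n → 𝓩) (θ : Fin n → 𝓣) (a : 𝓐) (g : Equiv.Perm (Fin n)),
      F (fun i => z (g i)) (fun i => θ (g i)) (act g a) = F z θ a)
    (δ : (Fin n → 𝓩) → 𝓐)
    (hδ : ∀ (g : Equiv.Perm (Fin n)) (z : Fin n → 𝓩), δ (fun i => z (g i)) = act g (δ z))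
    (θ : Fin n → 𝓣) :
    (n.factorial : ℝ≥0∞)⁻¹ * ∑ g : Equiv.Perm (Fin n),
        ∫⁻ z, F z (fun i => θ (g i)) (δ z) ∂P (fun i => θ (g i)) =
      ∫⁻ z, F z θ (δ z) ∂P θ := by
  simp only [lintegral_perm_eq_of_permInvariant P hP act F hF δ hδ θ]
  exact inv_factorial_mul_sum_perm_const n _

end

theorem oracle_PI_rule_via_mixture_problem_general
    {n : ℕ}
    {𝓩 𝓣 𝓐 : Type*} [MeasurableSpace 𝓩] [MeasurableSpace 𝓐]
    -- the model
    (P : (Fin n → 𝓣) → Measure (Fin n → 𝓩))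
    -- the model is permutation invariant
    (hPmodelPI : ∀ (θ : Fin n → 𝓣) (g : Equiv.Perm (Fin n)),
      (P θ).map (fun z i => z (g i)) = P (fun i => θ (g i)))
    -- a measurable action of the symmetric group on the action space
    (act : Equiv.Perm (Fin n) → 𝓐 → 𝓐)
    -- two measurable, permutation invariant loss-type functions L and h
    (L h : (Fin n → 𝓩) → (Fin n → 𝓣) → 𝓐 → ℝ≥0∞)
    (hLPI : ∀ (z : Fin n → 𝓩) (θ : Fin n → 𝓣) (a : 𝓐) (g : Equiv.Perm (Fin n)),
      L (fun i => z (g i)) (fun i => θ (g i)) (act g a) = L z θ a)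
    (hhPI : ∀ (z : Fin n → 𝓩) (θ : Fin n → 𝓣) (a : 𝓐) (g : Equiv.Perm (Fin n)),
      h (fun i => z (g i)) (fun i => θ (g i)) (act g a) = h z θ a)
    -- fixed parameter value, constraint set and level
    (θ : Fin n → 𝓣) (Tbar : Set 𝓣) (α : ℝ≥0∞)
    -- the mixture functionals B_θ and H_{θ'}
    (B : ((Fin n → 𝓩) → 𝓐) → ℝ≥0∞)
    (hB : ∀ δ : (Fin n → 𝓩) → 𝓐,
      B δ = ((n.factorial : ℝ≥0∞))⁻¹ *
        ∑ g : Equiv.Perm (Fin n),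
          ∫⁻ z, L z (fun i => θ (g i)) (δ z) ∂P (fun i => θ (g i)))
    (H : (Fin n → 𝓣) → ((Fin n → 𝓩) → 𝓐) → ℝ≥0∞)
    (hH : ∀ (θ' : Fin n → 𝓣) (δ : (Fin n → 𝓩) → 𝓐),
      H θ' δ = ((n.factorial : ℝ≥0∞))⁻¹ *
        ∑ g : Equiv.Perm (Fin n),
          ∫⁻ z, h z (fun i => θ' (g i)) (δ z) ∂P (fun i => θ' (g i)))
    -- δᴮ : a permutation invariant measurable rule solving the mixture problem
    (δB : (Fin n → 𝓩) → 𝓐)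
    (hδBPI : ∀ (g : Equiv.Perm (Fin n)) (z : Fin n → 𝓩),
      δB (fun i => z (g i)) = act g (δB z))
    (hδBfeas : ∀ θ' : Fin n → 𝓣, (∀ i, θ' i ∈ Tbar) → H θ' δB ≤ α)
    (hδBopt : ∀ δ : (Fin n → 𝓩) → 𝓐, Measurable δ →
      (∀ θ' : Fin n → 𝓣, (∀ i, θ' i ∈ Tbar) → H θ' δ ≤ α) → B δB ≤ B δ) :
    -- (i) δᴮ is feasible for the original problem, and
    -- (ii) δᴮ minimizes the risk at θ among all feasible permutation invariant rules
    (∀ θ' : Fin n → 𝓣, (∀ i, θ' i ∈ Tbar) →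
        ∫⁻ z, h z θ' (δB z) ∂P θ' ≤ α) ∧
      (∀ δ : (Fin n → 𝓩) → 𝓐, Measurable δ →
        (∀ (g : Equiv.Perm (Fin n)) (z : Fin n → 𝓩), δ (fun i => z (g i)) = act g (δ z)) →
        (∀ θ' : Fin n → 𝓣, (∀ i, θ' i ∈ Tbar) → ∫⁻ z, h z θ' (δ z) ∂P θ' ≤ α) →
        ∫⁻ z, L z θ (δB z) ∂P θ ≤ ∫⁻ z, L z θ (δ z) ∂P θ) := by
  have hH_eq : ∀ δ : (Fin n → 𝓩) → 𝓐,
      (∀ (g : Equiv.Perm (Fin n)) (z : Fin n → 𝓩), δ (fun i => z (g i)) = act g (δ z)) →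
      ∀ θ', H θ' δ = ∫⁻ z, h z θ' (δ z) ∂P θ' := fun δ hδ θ' => by
    rw [hH]
    exact mixture_eq_lintegral_of_permInvariant P hPmodelPI act h hhPI δ hδ θ'
  have hB_eq : ∀ δ : (Fin n → 𝓩) → 𝓐,
      (∀ (g : Equiv.Perm (Fin n)) (z : Fin n → 𝓩), δ (fun i => z (g i)) = act g (δ z)) →
      B δ = ∫⁻ z, L z θ (δ z) ∂P θ := fun δ hδ => by
    rw [hB]
    exact mixture_eq_lintegral_of_permInvariant P hPmodelPI act L hLPI δ hδ θ
  refine ⟨fun θ' hθ' => hH_eq δB hδBPI θ' ▸ hδBfeas θ' hθ', fun δ hδmeas hδPI hδfeas => ?_⟩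
  rw [← hB_eq δB hδBPI, ← hB_eq δ hδPI]
  exact hδBopt δ hδmeas fun θ' hθ' => (hH_eq δ hδPI θ').trans_le (hδfeas θ' hθ')

/-- **Theorem 1.** For a permutation invariant model and permutation invariant loss-type
functions `L`, `h`, a permutation invariant rule `δᴮ` which is feasible for the mixture
problem and minimizes the mixture objective among all feasible rules, is feasible for the
original problem and minimizes the risk at `θ` among all feasible permutation invariant
rules. -/
theorem oracle_PI_rule_via_mixture_problem
    {n : ℕ} (hn : 1 ≤ n)
    {𝓩 𝓣 𝓐 : Type*} [MeasurableSpace 𝓩] [MeasurableSpace 𝓣] [MeasurableSpace 𝓐]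
    -- the model
    (P : (Fin n → 𝓣) → Measure (Fin n → 𝓩))
    (hPprob : ∀ θ, IsProbabilityMeasure (P θ))
    -- the model is permutation invariant
    (hPmodelPI : ∀ (θ : Fin n → 𝓣) (g : Equiv.Perm (Fin n)),
      (P θ).map (fun z i => z (g i)) = P (fun i => θ (g i)))
    -- a measurable action of the symmetric group on the action space
    (act : Equiv.Perm (Fin n) → 𝓐 → 𝓐)
    (hact_meas : ∀ g, Measurable (act g))
    (hact_mul : ∀ (g g' : Equiv.Perm (Fin n)) (a : 𝓐), act (g * g') a = act g' (act g a))
    (hact_one : ∀ a : 𝓐, act 1 a = a)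
    -- two measurable, permutation invariant loss-type functions L and h
    (L h : (Fin n → 𝓩) → (Fin n → 𝓣) → 𝓐 → ℝ≥0∞)
    (hLmeas : Measurable fun p : (Fin n → 𝓩) × (Fin n → 𝓣) × 𝓐 => L p.1 p.2.1 p.2.2)
    (hhmeas : Measurable fun p : (Fin n → 𝓩) × (Fin n → 𝓣) × 𝓐 => h p.1 p.2.1 p.2.2)
    (hLPI : ∀ (z : Fin n → 𝓩) (θ : Fin n → 𝓣) (a : 𝓐) (g : Equiv.Perm (Fin n)),
      L (fun i => z (g i)) (fun i => θ (g i)) (act g a) = L z θ a)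
    (hhPI : ∀ (z : Fin n → 𝓩) (θ : Fin n → 𝓣) (a : 𝓐) (g : Equiv.Perm (Fin n)),
      h (fun i => z (g i)) (fun i => θ (g i)) (act g a) = h z θ a)
    -- fixed parameter value, constraint set and level
    (θ : Fin n → 𝓣) (Tbar : Set 𝓣) (α : ℝ≥0∞)
    -- the mixture functionals B_θ and H_{θ'}
    (B : ((Fin n → 𝓩) → 𝓐) → ℝ≥0∞)
    (hB : ∀ δ : (Fin n → 𝓩) → 𝓐,
      B δ = ((n.factorial : ℝ≥0∞))⁻¹ *
        ∑ g : Equiv.Perm (Fin n),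
          ∫⁻ z, L z (fun i => θ (g i)) (δ z) ∂P (fun i => θ (g i)))
    (H : (Fin n → 𝓣) → ((Fin n → 𝓩) → 𝓐) → ℝ≥0∞)
    (hH : ∀ (θ' : Fin n → 𝓣) (δ : (Fin n → 𝓩) → 𝓐),
      H θ' δ = ((n.factorial : ℝ≥0∞))⁻¹ *
        ∑ g : Equiv.Perm (Fin n),
          ∫⁻ z, h z (fun i => θ' (g i)) (δ z) ∂P (fun i => θ' (g i)))
    -- δᴮ : a permutation invariant measurable rule solving the mixture problem
    (δB : (Fin n → 𝓩) → 𝓐) (hδBmeas : Measurable δB)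
    (hδBPI : ∀ (g : Equiv.Perm (Fin n)) (z : Fin n → 𝓩),
      δB (fun i => z (g i)) = act g (δB z))
    (hδBfeas : ∀ θ' : Fin n → 𝓣, (∀ i, θ' i ∈ Tbar) → H θ' δB ≤ α)
    (hδBopt : ∀ δ : (Fin n → 𝓩) → 𝓐, Measurable δ →
      (∀ θ' : Fin n → 𝓣, (∀ i, θ' i ∈ Tbar) → H θ' δ ≤ α) → B δB ≤ B δ) :
    -- (i) δᴮ is feasible for the original problem, and
    -- (ii) δᴮ minimizes the risk at θ among all feasible permutation invariant rules
    (∀ θ' : Fin n → 𝓣, (∀ i, θ' i ∈ Tbar) →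
        ∫⁻ z, h z θ' (δB z) ∂P θ' ≤ α) ∧
      (∀ δ : (Fin n → 𝓩) → 𝓐, Measurable δ →
        (∀ (g : Equiv.Perm (Fin n)) (z : Fin n → 𝓩), δ (fun i => z (g i)) = act g (δ z)) →
        (∀ θ' : Fin n → 𝓣, (∀ i, θ' i ∈ Tbar) → ∫⁻ z, h z θ' (δ z) ∂P θ' ≤ α) →
        ∫⁻ z, L z θ (δB z) ∂P θ ≤ ∫⁻ z, L z θ (δ z) ∂P θ) :=
  oracle_PI_rule_via_mixture_problem_general P hPmodelPI act L h hLPI hhPI θ Tbar α B hB H hH δB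
    hδBPI hδBfeas hδBopt
end

section
/- (Theorem 2, density form.) Consider a permutation invariant model dominated by a σ-finite measure μ on 𝒵ⁿ, with P_{θ'} = f(·; θ') · μ for a jointly measurable density f, and a permutation invariant measurable loss L : 𝒵ⁿ × 𝒯ⁿ × 𝒜 → [0,∞]. Fix θ ∈ 𝒯ⁿ and define ρ̃_θ(z, a) = Σ_{g∈S_n} L(z, g(θ), a) · f(z; g(θ)). Suppose δ* is a measurable rule such that for μ-almost every z, ρ̃_θ(z, δ*(z)) ≤ ρ̃_θ(z, a) for every a ∈ 𝒜. Then B_θ(δ*) ≤ B_θ(δ) for every measurable rule δ, where B_θ(δ) = (1/n!) Σ_{g∈S_n} ∫ L(z, g(θ), δ(z)) f(z; g(θ)) dμ(z). If in addition δ* is permutation invariant, then R(θ, δ*) ≤ R(θ, δ) for every permutation invariant measurable rule δ; i.e., δ* is the oracle permutation invariant rule at θ. -/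
/-!
Summing the loss over the orbit `{g(θ)}` turns the average `B_θ` of the risks at the permuted
parameters into `(n!)⁻¹ ∫ ρ̃_θ(z, δ(z)) dμ(z)`, which a pointwise minimizer of `ρ̃_θ` minimizes.
For a permutation invariant rule, invariance of model and loss makes all the risks
`R(g(θ), δ)` equal to `R(θ, δ)`, so on such rules `B_θ` is the risk at `θ`.
-/

open MeasureTheory
open scoped ENNReal

theorem measurable_loss_comp {X Θ A : Type*} [MeasurableSpace X] [MeasurableSpace Θ]
    [MeasurableSpace A] {L : X → Θ → A → ℝ≥0∞}
    (hL : Measurable fun p : X × Θ × A => L p.1 p.2.1 p.2.2) (θ : Θ) {δ : X → A}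
    (hδ : Measurable δ) : Measurable fun z => L z θ (δ z) :=
  hL.comp (measurable_id.prodMk (measurable_const.prodMk hδ))

theorem lintegral_mul_eq_lintegral_withDensity {X : Type*} [MeasurableSpace X] {μ : Measure X}
    {f h : X → ℝ≥0∞} (hf : Measurable f) (hh : Measurable h) :
    ∫⁻ z, h z * f z ∂μ = ∫⁻ z, h z ∂μ.withDensity f := by
  simp only [lintegral_withDensity_eq_lintegral_mul μ hf hh, Pi.mul_apply, mul_comm]

theorem lintegral_le_of_ae_isMinimizer {X A : Type*} [MeasurableSpace X] {μ : Measure X}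
    {ρ : X → A → ℝ≥0∞} {δstar : X → A} (hmin : ∀ᵐ z ∂μ, ∀ a, ρ z (δstar z) ≤ ρ z a)
    (δ : X → A) : ∫⁻ z, ρ z (δstar z) ∂μ ≤ ∫⁻ z, ρ z (δ z) ∂μ :=
  lintegral_mono_ae (hmin.mono fun z hz => hz (δ z))

theorem ENNReal.inv_card_mul_sum_const {α : Type*} [Fintype α] [Nonempty α] (c : ℝ≥0∞) :
    (Fintype.card α : ℝ≥0∞)⁻¹ * ∑ _ : α, c = c := by
  rw [Finset.sum_const, Finset.card_univ, nsmul_eq_mul, ← mul_assoc,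
    ENNReal.inv_mul_cancel (by exact_mod_cast Fintype.card_ne_zero) (ENNReal.natCast_ne_top _),
    one_mul]

section PermutationInvariant

variable {ι 𝓩 𝓣 𝓐 : Type*} [MeasurableSpace 𝓩] [MeasurableSpace 𝓣] [MeasurableSpace 𝓐]
  {P : (ι → 𝓣) → Measure (ι → 𝓩)} {act : Equiv.Perm ι → 𝓐 → 𝓐}
  {L : (ι → 𝓩) → (ι → 𝓣) → 𝓐 → ℝ≥0∞} {δ : (ι → 𝓩) → 𝓐}

theorem lintegral_loss_perm_param
    (hP : ∀ (θ : ι → 𝓣) (g : Equiv.Perm ι),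
      (P θ).map (fun z i => z (g i)) = P (fun i => θ (g i)))
    (hLmeas : Measurable fun p : (ι → 𝓩) × (ι → 𝓣) × 𝓐 => L p.1 p.2.1 p.2.2)
    (hL : ∀ (z : ι → 𝓩) (θ : ι → 𝓣) (a : 𝓐) (g : Equiv.Perm ι),
      L (fun i => z (g i)) (fun i => θ (g i)) (act g a) = L z θ a)
    (hδ : Measurable δ)
    (hδPI : ∀ (g : Equiv.Perm ι) (z : ι → 𝓩), δ (fun i => z (g i)) = act g (δ z))
    (θ : ι → 𝓣) (g : Equiv.Perm ι) :
    ∫⁻ z, L z (fun i => θ (g i)) (δ z) ∂P (fun i => θ (g i)) = ∫⁻ z, L z θ (δ z) ∂P θ := by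
  rw [← hP, lintegral_map (measurable_loss_comp hLmeas _ hδ) (by fun_prop)]
  simp only [hδPI, hL]

theorem inv_card_perm_mul_sum_lintegral_loss [Fintype ι] [DecidableEq ι]
    (hP : ∀ (θ : ι → 𝓣) (g : Equiv.Perm ι),
      (P θ).map (fun z i => z (g i)) = P (fun i => θ (g i)))
    (hLmeas : Measurable fun p : (ι → 𝓩) × (ι → 𝓣) × 𝓐 => L p.1 p.2.1 p.2.2)
    (hL : ∀ (z : ι → 𝓩) (θ : ι → 𝓣) (a : 𝓐) (g : Equiv.Perm ι),
      L (fun i => z (g i)) (fun i => θ (g i)) (act g a) = L z θ a)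
    (hδ : Measurable δ)
    (hδPI : ∀ (g : Equiv.Perm ι) (z : ι → 𝓩), δ (fun i => z (g i)) = act g (δ z))
    (θ : ι → 𝓣) :
    (Fintype.card (Equiv.Perm ι) : ℝ≥0∞)⁻¹ *
        ∑ g : Equiv.Perm ι, ∫⁻ z, L z (fun i => θ (g i)) (δ z) ∂P (fun i => θ (g i)) =
      ∫⁻ z, L z θ (δ z) ∂P θ := by
  simp only [lintegral_loss_perm_param hP hLmeas hL hδ hδPI θ]
  exact ENNReal.inv_card_mul_sum_const _

end PermutationInvariant

theorem oracle_PI_rule_density_form_general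
    {n : ℕ}
    {𝓩 𝓣 𝓐 : Type*} [MeasurableSpace 𝓩] [MeasurableSpace 𝓣] [MeasurableSpace 𝓐]
    -- the model, dominated by a σ-finite measure μ with density f
    (P : (Fin n → 𝓣) → Measure (Fin n → 𝓩))
    (μ : Measure (Fin n → 𝓩))
    (f : (Fin n → 𝓩) → (Fin n → 𝓣) → ℝ≥0∞)
    (hfmeas : Measurable fun p : (Fin n → 𝓩) × (Fin n → 𝓣) => f p.1 p.2)
    (hdom : ∀ θ' : Fin n → 𝓣, P θ' = μ.withDensity (fun z => f z θ'))
    -- the model is permutation invariant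
    (hPmodelPI : ∀ (θ : Fin n → 𝓣) (g : Equiv.Perm (Fin n)),
      (P θ).map (fun z i => z (g i)) = P (fun i => θ (g i)))
    -- a measurable action of the symmetric group on the action space
    (act : Equiv.Perm (Fin n) → 𝓐 → 𝓐)
    -- a measurable, permutation invariant loss
    (L : (Fin n → 𝓩) → (Fin n → 𝓣) → 𝓐 → ℝ≥0∞)
    (hLmeas : Measurable fun p : (Fin n → 𝓩) × (Fin n → 𝓣) × 𝓐 => L p.1 p.2.1 p.2.2)
    (hLPI : ∀ (z : Fin n → 𝓩) (θ : Fin n → 𝓣) (a : 𝓐) (g : Equiv.Perm (Fin n)),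
      L (fun i => z (g i)) (fun i => θ (g i)) (act g a) = L z θ a)
    -- fixed parameter value
    (θ : Fin n → 𝓣)
    -- the (unnormalized) posterior expected loss ρ̃_θ
    (ρ : (Fin n → 𝓩) → 𝓐 → ℝ≥0∞)
    (hρ : ∀ (z : Fin n → 𝓩) (a : 𝓐),
      ρ z a = ∑ g : Equiv.Perm (Fin n),
        L z (fun i => θ (g i)) a * f z (fun i => θ (g i)))
    -- the mixture objective B_θ
    (B : ((Fin n → 𝓩) → 𝓐) → ℝ≥0∞)
    (hB : ∀ δ : (Fin n → 𝓩) → 𝓐,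
      B δ = ((n.factorial : ℝ≥0∞))⁻¹ *
        ∑ g : Equiv.Perm (Fin n),
          ∫⁻ z, L z (fun i => θ (g i)) (δ z) * f z (fun i => θ (g i)) ∂μ)
    -- δ* : a measurable rule that μ-a.e. minimizes the posterior expected loss pointwise
    (δstar : (Fin n → 𝓩) → 𝓐) (hδstarMeas : Measurable δstar)
    (hδstarMin : ∀ᵐ z ∂μ, ∀ a : 𝓐, ρ z (δstar z) ≤ ρ z a) :
    -- (i) δ* minimizes the mixture objective among all measurable rules, and
    -- (ii) if δ* is permutation invariant, it minimizes the risk at θ among PI rules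
    (∀ δ : (Fin n → 𝓩) → 𝓐, Measurable δ → B δstar ≤ B δ) ∧
      ((∀ (g : Equiv.Perm (Fin n)) (z : Fin n → 𝓩),
          δstar (fun i => z (g i)) = act g (δstar z)) →
        ∀ δ : (Fin n → 𝓩) → 𝓐, Measurable δ →
          (∀ (g : Equiv.Perm (Fin n)) (z : Fin n → 𝓩), δ (fun i => z (g i)) = act g (δ z)) →
          ∫⁻ z, L z θ (δstar z) ∂P θ ≤ ∫⁻ z, L z θ (δ z) ∂P θ) := by
  have hf : ∀ θ', Measurable fun z => f z θ' := fun θ' =>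
    hfmeas.comp (measurable_id.prodMk measurable_const)
  have hB_posterior : ∀ δ, Measurable δ → B δ = (n.factorial : ℝ≥0∞)⁻¹ * ∫⁻ z, ρ z (δ z) ∂μ := by
    intro δ hδ
    simp only [hB, hρ]
    rw [lintegral_finsetSum]
    exact fun g _ => (measurable_loss_comp hLmeas _ hδ).mul (hf _)
  have hB_risk : ∀ δ, Measurable δ → (∀ g z, δ (fun i => z (g i)) = act g (δ z)) →
      B δ = ∫⁻ z, L z θ (δ z) ∂P θ := by
    intro δ hδ hδPI
    simp only [hB, lintegral_mul_eq_lintegral_withDensity (hf _) (measurable_loss_comp hLmeas _ hδ),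
      ← hdom]
    simpa only [Fintype.card_perm, Fintype.card_fin] using
      inv_card_perm_mul_sum_lintegral_loss hPmodelPI hLmeas hLPI hδ hδPI θ
  have hmin : ∀ δ, Measurable δ → B δstar ≤ B δ := fun δ hδ => by
    rw [hB_posterior δstar hδstarMeas, hB_posterior δ hδ]
    exact mul_le_mul_right (lintegral_le_of_ae_isMinimizer hδstarMin δ) _
  refine ⟨hmin, fun hδstarPI δ hδ hδPI => ?_⟩
  rw [← hB_risk δstar hδstarMeas hδstarPI, ← hB_risk δ hδ hδPI]
  exact hmin δ hδ

/-- **Theorem 2 (density form).** In a dominated permutation invariant model with densities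
`f(·; θ')` with respect to a σ-finite measure `μ`, a rule `δ*` which for `μ`-a.e. `z`
minimizes `a ↦ ∑_g L(z, g(θ), a) f(z; g(θ))` minimizes the mixture objective `B_θ` among all
measurable rules; if moreover `δ*` is permutation invariant, it minimizes the risk at `θ`
among all permutation invariant measurable rules. -/
theorem oracle_PI_rule_density_form
    {n : ℕ} (hn : 1 ≤ n)
    {𝓩 𝓣 𝓐 : Type*} [MeasurableSpace 𝓩] [MeasurableSpace 𝓣] [MeasurableSpace 𝓐]
    -- the model, dominated by a σ-finite measure μ with density f
    (P : (Fin n → 𝓣) → Measure (Fin n → 𝓩))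
    (hPprob : ∀ θ, IsProbabilityMeasure (P θ))
    (μ : Measure (Fin n → 𝓩)) [SigmaFinite μ]
    (f : (Fin n → 𝓩) → (Fin n → 𝓣) → ℝ≥0∞)
    (hfmeas : Measurable fun p : (Fin n → 𝓩) × (Fin n → 𝓣) => f p.1 p.2)
    (hdom : ∀ θ' : Fin n → 𝓣, P θ' = μ.withDensity (fun z => f z θ'))
    -- the model is permutation invariant
    (hPmodelPI : ∀ (θ : Fin n → 𝓣) (g : Equiv.Perm (Fin n)),
      (P θ).map (fun z i => z (g i)) = P (fun i => θ (g i)))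
    -- a measurable action of the symmetric group on the action space
    (act : Equiv.Perm (Fin n) → 𝓐 → 𝓐)
    (hact_meas : ∀ g, Measurable (act g))
    (hact_mul : ∀ (g g' : Equiv.Perm (Fin n)) (a : 𝓐), act (g * g') a = act g' (act g a))
    (hact_one : ∀ a : 𝓐, act 1 a = a)
    -- a measurable, permutation invariant loss
    (L : (Fin n → 𝓩) → (Fin n → 𝓣) → 𝓐 → ℝ≥0∞)
    (hLmeas : Measurable fun p : (Fin n → 𝓩) × (Fin n → 𝓣) × 𝓐 => L p.1 p.2.1 p.2.2)
    (hLPI : ∀ (z : Fin n → 𝓩) (θ : Fin n → 𝓣) (a : 𝓐) (g : Equiv.Perm (Fin n)),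
      L (fun i => z (g i)) (fun i => θ (g i)) (act g a) = L z θ a)
    -- fixed parameter value
    (θ : Fin n → 𝓣)
    -- the (unnormalized) posterior expected loss ρ̃_θ
    (ρ : (Fin n → 𝓩) → 𝓐 → ℝ≥0∞)
    (hρ : ∀ (z : Fin n → 𝓩) (a : 𝓐),
      ρ z a = ∑ g : Equiv.Perm (Fin n),
        L z (fun i => θ (g i)) a * f z (fun i => θ (g i)))
    -- the mixture objective B_θ
    (B : ((Fin n → 𝓩) → 𝓐) → ℝ≥0∞)
    (hB : ∀ δ : (Fin n → 𝓩) → 𝓐,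
      B δ = ((n.factorial : ℝ≥0∞))⁻¹ *
        ∑ g : Equiv.Perm (Fin n),
          ∫⁻ z, L z (fun i => θ (g i)) (δ z) * f z (fun i => θ (g i)) ∂μ)
    -- δ* : a measurable rule that μ-a.e. minimizes the posterior expected loss pointwise
    (δstar : (Fin n → 𝓩) → 𝓐) (hδstarMeas : Measurable δstar)
    (hδstarMin : ∀ᵐ z ∂μ, ∀ a : 𝓐, ρ z (δstar z) ≤ ρ z a) :
    -- (i) δ* minimizes the mixture objective among all measurable rules, and
    -- (ii) if δ* is permutation invariant, it minimizes the risk at θ among PI rules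
    (∀ δ : (Fin n → 𝓩) → 𝓐, Measurable δ → B δstar ≤ B δ) ∧
      ((∀ (g : Equiv.Perm (Fin n)) (z : Fin n → 𝓩),
          δstar (fun i => z (g i)) = act g (δstar z)) →
        ∀ δ : (Fin n → 𝓩) → 𝓐, Measurable δ →
          (∀ (g : Equiv.Perm (Fin n)) (z : Fin n → 𝓩), δ (fun i => z (g i)) = act g (δ z)) →
          ∫⁻ z, L z θ (δstar z) ∂P θ ≤ ∫⁻ z, L z θ (δ z) ∂P θ) :=
  oracle_PI_rule_density_form_general P μ f hfmeas hdom hPmodelPI act L hLmeas hLPI θ ρ hρ B hB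
    δstar hδstarMeas hδstarMin
end

section
/- (Oracle PI rule for a constrained problem via the Lagrangian mixture problem.) Consider a permutation invariant model and permutation invariant measurable functions L, h : 𝒵ⁿ × 𝒯ⁿ × 𝒜 → [0,∞) (PI with respect to the same action ã). Fix θ ∈ 𝒯ⁿ, λ ≥ 0, α ≥ 0, and for a measurable rule δ write B_θ^F(δ) = (1/n!) Σ_{g∈S_n} ∫ F(z, g(θ), δ(z)) dP_{g(θ)}(z) for F ∈ {L, h, L+λh}, assumed finite for the rules considered. Suppose δ_λ is a permutation invariant measurable rule such that B_θ^{L+λh}(δ_λ) ≤ B_θ^{L+λh}(δ) for every measurable rule δ, and B_θ^{h}(δ_λ) = α. Then ∫ h(z, θ, δ_λ(z)) dP_θ(z) = α, and for every permutation invariant measurable rule δ with ∫ h(z, θ, δ(z)) dP_θ(z) ≤ α, one has R(θ, δ_λ) ≤ R(θ, δ), where R(θ, δ) = ∫ L(z, θ, δ(z)) dP_θ(z). -/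
open MeasureTheory
open scoped ENNReal

/-!
For a permutation invariant model, loss `F` and rule `δ`, the change of variables `z ↦ g(z)`
shows that every term of the mixture `B_θ^F(δ)` equals the risk `∫ F(z, θ, δ(z)) dP_θ(z)`, so on
permutation invariant rules the mixture functionals are just the functionals at `θ`. Hence `δ_λ`
meets the constraint at `θ` with equality, and for an admissible permutation invariant `δ`,
`R(θ, δ_λ) + λα = B_θ^{L+λh}(δ_λ) ≤ B_θ^{L+λh}(δ) = R(θ, δ) + λ ∫ h(δ) dP_θ ≤ R(θ, δ) + λα`;
cancelling the finite `λα` gives the claim.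
-/

section PermutationInvariance

variable {ι 𝓩 𝓣 𝓐 : Type*} [MeasurableSpace 𝓩]
  (P : (ι → 𝓣) → Measure (ι → 𝓩)) (θ : ι → 𝓣) (act : Equiv.Perm ι → 𝓐 → 𝓐)
  (F : (ι → 𝓩) → (ι → 𝓣) → 𝓐 → ℝ≥0∞) (δ : (ι → 𝓩) → 𝓐)

theorem lintegral_perm_eq_of_perm_invariant (g : Equiv.Perm ι)
    (hP : (P θ).map (fun z i => z (g i)) = P (fun i => θ (g i)))
    (hF : ∀ z a, F (fun i => z (g i)) (fun i => θ (g i)) (act g a) = F z θ a)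
    (hδ : ∀ z, δ (fun i => z (g i)) = act g (δ z)) :
    ∫⁻ z, F z (fun i => θ (g i)) (δ z) ∂P (fun i => θ (g i)) = ∫⁻ z, F z θ (δ z) ∂P θ := by
  let e : (ι → 𝓩) ≃ᵐ (ι → 𝓩) := MeasurableEquiv.arrowCongr' g.symm (MeasurableEquiv.refl 𝓩)
  have he : ⇑e = fun z i => z (g i) := rfl
  rw [← hP, ← he, lintegral_map_equiv]
  simp only [he, hδ, hF]

theorem perm_average_const [Fintype ι] [DecidableEq ι] (c : ℝ≥0∞) :
    ((Fintype.card ι).factorial : ℝ≥0∞)⁻¹ * ∑ _g : Equiv.Perm ι, c = c := by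
  rw [Finset.sum_const, Finset.card_univ, Fintype.card_perm, nsmul_eq_mul, ← mul_assoc,
    ENNReal.inv_mul_cancel (by exact_mod_cast (Fintype.card ι).factorial_ne_zero)
      (ENNReal.natCast_ne_top _), one_mul]

theorem perm_average_lintegral_eq_of_perm_invariant [Fintype ι] [DecidableEq ι]
    (hP : ∀ g : Equiv.Perm ι, (P θ).map (fun z i => z (g i)) = P (fun i => θ (g i)))
    (hF : ∀ z θ' a (g : Equiv.Perm ι),
      F (fun i => z (g i)) (fun i => θ' (g i)) (act g a) = F z θ' a)
    (hδ : ∀ (g : Equiv.Perm ι) z, δ (fun i => z (g i)) = act g (δ z)) :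
    ((Fintype.card ι).factorial : ℝ≥0∞)⁻¹ * ∑ g : Equiv.Perm ι,
        ∫⁻ z, F z (fun i => θ (g i)) (δ z) ∂P (fun i => θ (g i)) =
      ∫⁻ z, F z θ (δ z) ∂P θ := by
  simp_rw [lintegral_perm_eq_of_perm_invariant P θ act F δ _ (hP _) (fun z a => hF z θ a _)
    (hδ _)]
  exact perm_average_const _

end PermutationInvariance

theorem oracle_PI_rule_lagrangian_mixture_general
    {n : ℕ}
    {𝓩 𝓣 𝓐 : Type*} [MeasurableSpace 𝓩] [MeasurableSpace 𝓣] [MeasurableSpace 𝓐]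
    -- the model
    (P : (Fin n → 𝓣) → Measure (Fin n → 𝓩))
    -- the model is permutation invariant
    (hPmodelPI : ∀ (θ : Fin n → 𝓣) (g : Equiv.Perm (Fin n)),
      (P θ).map (fun z i => z (g i)) = P (fun i => θ (g i)))
    -- a measurable action of the symmetric group on the action space
    (act : Equiv.Perm (Fin n) → 𝓐 → 𝓐)
    -- measurable, permutation invariant, finite-valued functions L and h
    (L h : (Fin n → 𝓩) → (Fin n → 𝓣) → 𝓐 → ℝ≥0∞)
    (hLmeas : Measurable fun p : (Fin n → 𝓩) × (Fin n → 𝓣) × 𝓐 => L p.1 p.2.1 p.2.2)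
    (hLPI : ∀ (z : Fin n → 𝓩) (θ' : Fin n → 𝓣) (a : 𝓐) (g : Equiv.Perm (Fin n)),
      L (fun i => z (g i)) (fun i => θ' (g i)) (act g a) = L z θ' a)
    (hhPI : ∀ (z : Fin n → 𝓩) (θ' : Fin n → 𝓣) (a : 𝓐) (g : Equiv.Perm (Fin n)),
      h (fun i => z (g i)) (fun i => θ' (g i)) (act g a) = h z θ' a)
    -- fixed parameter value, multiplier and level
    (θ : Fin n → 𝓣) (lam : ℝ≥0∞) (hlamfin : lam ≠ ⊤) (α : ℝ≥0∞) (hαfin : α ≠ ⊤)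
    -- the mixture functionals B_θ^L, B_θ^h, B_θ^{L+λh}
    (Bh BLag : ((Fin n → 𝓩) → 𝓐) → ℝ≥0∞)
    (hBh : ∀ δ : (Fin n → 𝓩) → 𝓐,
      Bh δ = ((n.factorial : ℝ≥0∞))⁻¹ * ∑ g : Equiv.Perm (Fin n),
        ∫⁻ z, h z (fun i => θ (g i)) (δ z) ∂P (fun i => θ (g i)))
    (hBLag : ∀ δ : (Fin n → 𝓩) → 𝓐,
      BLag δ = ((n.factorial : ℝ≥0∞))⁻¹ * ∑ g : Equiv.Perm (Fin n),
        ∫⁻ z, (L z (fun i => θ (g i)) (δ z) + lam * h z (fun i => θ (g i)) (δ z))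
          ∂P (fun i => θ (g i)))
    -- δ_λ : a permutation invariant measurable rule minimizing the mixture Lagrangian,
    -- with finite mixture objectives, meeting the mixture constraint with equality
    (δlam : (Fin n → 𝓩) → 𝓐) (hδlamMeas : Measurable δlam)
    (hδlamPI : ∀ (g : Equiv.Perm (Fin n)) (z : Fin n → 𝓩),
      δlam (fun i => z (g i)) = act g (δlam z))
    (hδlamOpt : ∀ δ : (Fin n → 𝓩) → 𝓐, Measurable δ → BLag δlam ≤ BLag δ)
    (hδlamCon : Bh δlam = α) :
    -- δ_λ meets the original constraint at θ with equality, and minimizes the risk at θ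
    -- among all permutation invariant measurable rules meeting the constraint at θ
    (∫⁻ z, h z θ (δlam z) ∂P θ = α) ∧
      ∀ δ : (Fin n → 𝓩) → 𝓐, Measurable δ →
        (∀ (g : Equiv.Perm (Fin n)) (z : Fin n → 𝓩), δ (fun i => z (g i)) = act g (δ z)) →
        (∫⁻ z, h z θ (δ z) ∂P θ ≤ α) →
        ∫⁻ z, L z θ (δlam z) ∂P θ ≤ ∫⁻ z, L z θ (δ z) ∂P θ := by
  have hmix : ∀ F : (Fin n → 𝓩) → (Fin n → 𝓣) → 𝓐 → ℝ≥0∞,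
      (∀ z θ' a (g : Equiv.Perm (Fin n)),
        F (fun i => z (g i)) (fun i => θ' (g i)) (act g a) = F z θ' a) →
      ∀ δ : (Fin n → 𝓩) → 𝓐, (∀ (g : Equiv.Perm (Fin n)) z, δ (fun i => z (g i)) = act g (δ z)) →
      ((n.factorial : ℝ≥0∞))⁻¹ * ∑ g : Equiv.Perm (Fin n),
          ∫⁻ z, F z (fun i => θ (g i)) (δ z) ∂P (fun i => θ (g i)) =
        ∫⁻ z, F z θ (δ z) ∂P θ := fun F hF δ hδ => by
    simpa only [Fintype.card_fin] using
      perm_average_lintegral_eq_of_perm_invariant P θ act F δ (hPmodelPI θ) hF hδ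
  have hBLag_eq : ∀ δ : (Fin n → 𝓩) → 𝓐, Measurable δ →
      (∀ (g : Equiv.Perm (Fin n)) z, δ (fun i => z (g i)) = act g (δ z)) →
      BLag δ = ∫⁻ z, L z θ (δ z) ∂P θ + lam * ∫⁻ z, h z θ (δ z) ∂P θ := by
    intro δ hδm hδ
    rw [hBLag, hmix (fun z θ' a => L z θ' a + lam * h z θ' a)
      (fun z θ' a g => by rw [hLPI, hhPI]) δ hδ,
      lintegral_add_left (by fun_prop), lintegral_const_mul' _ _ hlamfin]
  have hδlam_con : ∫⁻ z, h z θ (δlam z) ∂P θ = α := by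
    rw [← hmix h hhPI δlam hδlamPI, ← hBh, hδlamCon]
  refine ⟨hδlam_con, fun δ hδm hδ hδ_con => ?_⟩
  have hopt := hδlamOpt δ hδm
  rw [hBLag_eq δlam hδlamMeas hδlamPI, hBLag_eq δ hδm hδ, hδlam_con] at hopt
  exact ENNReal.le_of_add_le_add_right (ENNReal.mul_ne_top hlamfin hαfin)
    (hopt.trans (by gcongr))

/-- **Oracle PI rule for a constrained problem via the Lagrangian mixture problem.**
If a permutation invariant rule `δ_λ` minimizes the mixture Lagrangian `B_θ^{L+λh}` over all
measurable rules and satisfies `B_θ^h(δ_λ) = α`, then `δ_λ` exactly meets the original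
constraint at `θ` and minimizes the risk at `θ` among all permutation invariant measurable
rules satisfying the original constraint at `θ`. -/
theorem oracle_PI_rule_lagrangian_mixture
    {n : ℕ} (hn : 1 ≤ n)
    {𝓩 𝓣 𝓐 : Type*} [MeasurableSpace 𝓩] [MeasurableSpace 𝓣] [MeasurableSpace 𝓐]
    -- the model
    (P : (Fin n → 𝓣) → Measure (Fin n → 𝓩))
    (hPprob : ∀ θ, IsProbabilityMeasure (P θ))
    -- the model is permutation invariant
    (hPmodelPI : ∀ (θ : Fin n → 𝓣) (g : Equiv.Perm (Fin n)),
      (P θ).map (fun z i => z (g i)) = P (fun i => θ (g i)))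
    -- a measurable action of the symmetric group on the action space
    (act : Equiv.Perm (Fin n) → 𝓐 → 𝓐)
    (hact_meas : ∀ g, Measurable (act g))
    (hact_mul : ∀ (g g' : Equiv.Perm (Fin n)) (a : 𝓐), act (g * g') a = act g' (act g a))
    (hact_one : ∀ a : 𝓐, act 1 a = a)
    -- measurable, permutation invariant, finite-valued functions L and h
    (L h : (Fin n → 𝓩) → (Fin n → 𝓣) → 𝓐 → ℝ≥0∞)
    (hLmeas : Measurable fun p : (Fin n → 𝓩) × (Fin n → 𝓣) × 𝓐 => L p.1 p.2.1 p.2.2)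
    (hhmeas : Measurable fun p : (Fin n → 𝓩) × (Fin n → 𝓣) × 𝓐 => h p.1 p.2.1 p.2.2)
    (hLfin : ∀ z θ' a, L z θ' a ≠ ⊤) (hhfin : ∀ z θ' a, h z θ' a ≠ ⊤)
    (hLPI : ∀ (z : Fin n → 𝓩) (θ' : Fin n → 𝓣) (a : 𝓐) (g : Equiv.Perm (Fin n)),
      L (fun i => z (g i)) (fun i => θ' (g i)) (act g a) = L z θ' a)
    (hhPI : ∀ (z : Fin n → 𝓩) (θ' : Fin n → 𝓣) (a : 𝓐) (g : Equiv.Perm (Fin n)),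
      h (fun i => z (g i)) (fun i => θ' (g i)) (act g a) = h z θ' a)
    -- fixed parameter value, multiplier and level
    (θ : Fin n → 𝓣) (lam : ℝ≥0∞) (hlamfin : lam ≠ ⊤) (α : ℝ≥0∞) (hαfin : α ≠ ⊤)
    -- the mixture functionals B_θ^L, B_θ^h, B_θ^{L+λh}
    (BL Bh BLag : ((Fin n → 𝓩) → 𝓐) → ℝ≥0∞)
    (hBL : ∀ δ : (Fin n → 𝓩) → 𝓐,
      BL δ = ((n.factorial : ℝ≥0∞))⁻¹ * ∑ g : Equiv.Perm (Fin n),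
        ∫⁻ z, L z (fun i => θ (g i)) (δ z) ∂P (fun i => θ (g i)))
    (hBh : ∀ δ : (Fin n → 𝓩) → 𝓐,
      Bh δ = ((n.factorial : ℝ≥0∞))⁻¹ * ∑ g : Equiv.Perm (Fin n),
        ∫⁻ z, h z (fun i => θ (g i)) (δ z) ∂P (fun i => θ (g i)))
    (hBLag : ∀ δ : (Fin n → 𝓩) → 𝓐,
      BLag δ = ((n.factorial : ℝ≥0∞))⁻¹ * ∑ g : Equiv.Perm (Fin n),
        ∫⁻ z, (L z (fun i => θ (g i)) (δ z) + lam * h z (fun i => θ (g i)) (δ z))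
          ∂P (fun i => θ (g i)))
    -- δ_λ : a permutation invariant measurable rule minimizing the mixture Lagrangian,
    -- with finite mixture objectives, meeting the mixture constraint with equality
    (δlam : (Fin n → 𝓩) → 𝓐) (hδlamMeas : Measurable δlam)
    (hδlamPI : ∀ (g : Equiv.Perm (Fin n)) (z : Fin n → 𝓩),
      δlam (fun i => z (g i)) = act g (δlam z))
    (hδlamFin : BL δlam ≠ ⊤)
    (hδlamOpt : ∀ δ : (Fin n → 𝓩) → 𝓐, Measurable δ → BLag δlam ≤ BLag δ)
    (hδlamCon : Bh δlam = α) :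
    -- δ_λ meets the original constraint at θ with equality, and minimizes the risk at θ
    -- among all permutation invariant measurable rules meeting the constraint at θ
    (∫⁻ z, h z θ (δlam z) ∂P θ = α) ∧
      ∀ δ : (Fin n → 𝓩) → 𝓐, Measurable δ →
        (∀ (g : Equiv.Perm (Fin n)) (z : Fin n → 𝓩), δ (fun i => z (g i)) = act g (δ z)) →
        (∫⁻ z, h z θ (δ z) ∂P θ ≤ α) →
        ∫⁻ z, L z θ (δlam z) ∂P θ ≤ ∫⁻ z, L z θ (δ z) ∂P θ :=
  oracle_PI_rule_lagrangian_mixture_general P hPmodelPI act L h hLmeas hLPI hhPI θ lam hlamfin α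
    hαfin Bh BLag hBh hBLag δlam hδlamMeas hδlamPI hδlamOpt hδlamCon
end
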